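/- arXiv:0806.1746 — 8 statements merged into one kernel-verified Lean document; each statement's English description precedes it below -/
import Mathlib

section
/- Let H be a Hermitian matrix (on a finite-dimensional complex inner product space indexed by a finite set) with real non-positive off-diagonal entries in the standard basis. Then the spectral projector Π onto the eigenspace of the smallest eigenvalue of H has all matrix entries real and non-negative in the standard basis. -/
/-!
Pick `c` above the diagonal entries and the eigenvalues of `H`, and let `μ` be the least
eigenvalue. Then `A = (c - μ)⁻¹ (c - H)` has non-negative entries, and in an eigenbasis of `H` it
is diagonal with entries `(c - λᵢ) / (c - μ) ∈ [0, 1]`, equal to `1` exactly when `λᵢ = μ`. So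
`Aᵏ` converges to the spectral projector onto the `μ`-eigenspace, which therefore has non-negative
entries; an orthogonal projector is determined by its fixed vectors, so this projector is `P`.
-/

open Matrix Filter Topology Unitary

theorem IsStarProjection.eq_of_mul_eq_of_mul_eq {R : Type*} [Mul R] [StarMul R] {p q : R}
    (hp : IsStarProjection p) (hq : IsStarProjection q) (hpq : p * q = q) (hqp : q * p = p) :
    p = q := by
  rw [← hp.isSelfAdjoint.star_eq, ← hqp, star_mul, hp.isSelfAdjoint.star_eq,
    hq.isSelfAdjoint.star_eq, hpq]

theorem Unitary.continuous_conjStarAlgAut {S R : Type*} [Semiring R] [StarMul R] [SMul S R]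
    [IsScalarTower S R R] [SMulCommClass S R R] [TopologicalSpace R] [ContinuousMul R]
    (u : unitary R) : Continuous (conjStarAlgAut S R u) :=
  (continuous_const.mul continuous_id).mul continuous_const

namespace Matrix

variable {n : Type*} [Fintype n] [DecidableEq n]

omit [DecidableEq n] in
theorem mul_eq_right_of_mulVec_eq_self {R : Type*} [Semiring R] {p q : Matrix n n R}
    (hp : IsIdempotentElem p) (h : ∀ v, p *ᵥ v = v → q *ᵥ v = v) : q * p = p :=
  ext_iff_mulVec.2 fun v => by
    rw [← mulVec_mulVec]
    exact h _ (by rw [mulVec_mulVec, hp.eq])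

omit [DecidableEq n] in
theorem _root_.IsStarProjection.eq_of_mulVec_eq_self_iff {R : Type*} [Semiring R] [StarRing R]
    {p q : Matrix n n R} (hp : IsStarProjection p) (hq : IsStarProjection q)
    (h : ∀ v, p *ᵥ v = v ↔ q *ᵥ v = v) : p = q :=
  hp.eq_of_mul_eq_of_mul_eq hq
    (mul_eq_right_of_mulVec_eq_self hq.isIdempotentElem fun v => (h v).2)
    (mul_eq_right_of_mulVec_eq_self hp.isIdempotentElem fun v => (h v).1)

theorem conjStarAlgAut_mulVec_eq_iff {R : Type*} [CommRing R] [StarRing R]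
    (U : unitaryGroup n R) (A : Matrix n n R) (v w : n → R) :
    conjStarAlgAut R _ U A *ᵥ v = w ↔ A *ᵥ (star (U : Matrix n n R) *ᵥ v) =
      star (U : Matrix n n R) *ᵥ w := by
  have hU : star (U : Matrix n n R) * U = 1 := coe_star_mul_self U
  have hU' : (U : Matrix n n R) * star (U : Matrix n n R) = 1 := coe_mul_star_self U
  rw [conjStarAlgAut_apply, ← mulVec_mulVec, ← mulVec_mulVec]
  generalize A *ᵥ (star (U : Matrix n n R) *ᵥ v) = x
  constructor
  · rintro rfl
    rw [mulVec_mulVec, hU, one_mulVec]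
  · rintro rfl
    rw [mulVec_mulVec, hU', one_mulVec]

namespace IsHermitian

variable {𝕜 : Type*} [RCLike 𝕜] {H : Matrix n n 𝕜} (hH : H.IsHermitian)

noncomputable def eigenProj (μ : ℝ) : Matrix n n 𝕜 :=
  conjStarAlgAut 𝕜 _ hH.eigenvectorUnitary
    (diagonal fun i => if hH.eigenvalues i = μ then 1 else 0)

theorem isStarProjection_eigenProj (μ : ℝ) : IsStarProjection (hH.eigenProj μ) := by
  refine IsStarProjection.map ⟨?_, ?_⟩ _
  · rw [IsIdempotentElem, diagonal_mul_diagonal]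
    congr 1
    funext i
    split_ifs <;> simp
  · rw [IsSelfAdjoint, star_eq_conjTranspose, diagonal_conjTranspose]
    congr 1
    funext i
    simp only [Pi.star_apply, apply_ite star, star_one, star_zero]

theorem eigenProj_mulVec_eq_self_iff (μ : ℝ) (v : n → 𝕜) :
    hH.eigenProj μ *ᵥ v = v ↔ H *ᵥ v = (μ : 𝕜) • v := by
  conv_rhs => rw [hH.spectral_theorem]
  rw [eigenProj, conjStarAlgAut_mulVec_eq_iff, conjStarAlgAut_mulVec_eq_iff, mulVec_smul,
    funext_iff, funext_iff]
  refine forall_congr' fun i => ?_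
  simp only [mulVec_diagonal, Function.comp_apply, Pi.smul_apply, smul_eq_mul]
  split_ifs with h
  · simp [h]
  · simp only [zero_mul]
    constructor
    · intro h0; rw [← h0]; ring
    · intro h1
      by_contra h0
      exact h (by exact_mod_cast mul_right_cancel₀ (Ne.symm h0) h1)

theorem tendsto_pow_eigenProj {μ c : ℝ} (hμ : ∀ i, μ ≤ hH.eigenvalues i)
    (hc : ∀ i, hH.eigenvalues i ≤ c) (hμc : μ < c) :
    Tendsto (fun k : ℕ => ((((c - μ)⁻¹ : ℝ) : 𝕜) • ((c : 𝕜) • 1 - H)) ^ k) atTop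
      (𝓝 (hH.eigenProj μ)) := by
  set r : n → ℝ := fun i => (c - hH.eigenvalues i) / (c - μ)
  have hdiag : diagonal (RCLike.ofReal ∘ r) = (((c - μ)⁻¹ : ℝ) : 𝕜) •
      ((c : 𝕜) • (1 : Matrix n n 𝕜) - diagonal (RCLike.ofReal ∘ hH.eigenvalues)) := by
    rw [smul_one_eq_diagonal, diagonal_sub, ← diagonal_smul]
    congr 1
    funext i
    simp only [r, Function.comp_apply, Pi.smul_apply, smul_eq_mul]
    push_cast
    ring
  have hr : ∀ i, Tendsto (fun k : ℕ => (r i : 𝕜) ^ k) atTop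
      (𝓝 (if hH.eigenvalues i = μ then 1 else 0)) := by
    intro i
    have hs : 0 < c - μ := sub_pos.2 hμc
    split_ifs with h
    · have : r i = 1 := by simp only [r, h, div_self hs.ne']
      simp [this]
    · have hr0 : 0 ≤ r i := div_nonneg (sub_nonneg.2 (hc i)) hs.le
      have hr1 : r i < 1 := (div_lt_one hs).2 (by linarith [(hμ i).lt_of_ne (Ne.symm h)])
      simpa only [Function.comp_def, RCLike.ofReal_pow, RCLike.ofReal_zero] using
        (RCLike.continuous_ofReal.tendsto 0).comp (tendsto_pow_atTop_nhds_zero_of_lt_one hr0 hr1)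
  have hA : (((c - μ)⁻¹ : ℝ) : 𝕜) • ((c : 𝕜) • 1 - H) =
      conjStarAlgAut 𝕜 _ hH.eigenvectorUnitary (diagonal (RCLike.ofReal ∘ r)) := by
    rw [hdiag, map_smul, map_sub, map_smul, map_one, ← hH.spectral_theorem]
  simp_rw [hA, ← map_pow, diagonal_pow]
  exact ((Unitary.continuous_conjStarAlgAut _).tendsto _).comp
    ((continuous_id.matrix_diagonal.tendsto _).comp (tendsto_pi_nhds.2 hr))

end IsHermitian

omit [Fintype n] in
theorem smul_one_sub_apply_nonneg {R : Type*} [Ring R] [PartialOrder R] [IsOrderedRing R]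
    {H : Matrix n n R} {c : R} (hdiag : ∀ x, H x x ≤ c) (hoff : ∀ x y, x ≠ y → H x y ≤ 0)
    (x y : n) : 0 ≤ (c • 1 - H) x y := by
  rcases eq_or_ne x y with rfl | h
  · simpa using hdiag x
  · simpa [one_apply_ne h] using hoff x y h

end Matrix

open scoped ComplexOrder

theorem Matrix.IsHermitian.eigenProj_iInf_apply_nonneg {n : Type*} [Fintype n] [DecidableEq n]
    [Nonempty n] {H : Matrix n n ℂ} (hH : H.IsHermitian) (hoff : ∀ x y, x ≠ y → H x y ≤ 0)
    (x y : n) : 0 ≤ hH.eigenProj (⨅ i, hH.eigenvalues i) x y := by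
  set μ := ⨅ i, hH.eigenvalues i
  have hμ : ∀ i, μ ≤ hH.eigenvalues i := ciInf_le (Finite.bddBelow_range _)
  obtain ⟨i₀⟩ := ‹Nonempty n›
  obtain ⟨a, ha⟩ := Finite.exists_le fun x => (H x x).re
  obtain ⟨b, hb⟩ := Finite.exists_le hH.eigenvalues
  set c := max a (b + 1)
  have hbc : b < c := (lt_add_one b).trans_le (le_max_right _ _)
  have hc : ∀ i, hH.eigenvalues i ≤ c := fun i => (hb i).trans hbc.le
  have hμc : μ < c := (hμ i₀).trans_lt ((hb i₀).trans_lt hbc)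
  have hM : ∀ x y, 0 ≤ ((c : ℂ) • 1 - H) x y := by
    refine smul_one_sub_apply_nonneg (fun x => ?_) hoff
    exact Complex.le_def.2 ⟨(ha x).trans (le_max_left _ _),
      Complex.conj_eq_iff_im.1 (hH.apply x x)⟩
  have hA : ∀ x y, 0 ≤ ((((c - μ)⁻¹ : ℝ) : ℂ) • ((c : ℂ) • 1 - H)) x y := fun x y =>
    mul_nonneg (Complex.zero_le_real.2 (inv_nonneg.2 (sub_pos.2 hμc).le)) (hM x y)
  exact ge_of_tendsto' (((continuous_id.matrix_elem x y).tendsto _).comp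
    (hH.tendsto_pow_eigenProj hμ hc hμc)) fun k => pow_apply_nonneg hA k x y

theorem stmt_0_general {n : ℕ} (H : Matrix (Fin n) (Fin n) ℂ)
    (hH : H.IsHermitian)
    (hoff : ∀ x y, x ≠ y → (H x y).im = 0 ∧ (H x y).re ≤ 0)
    (P : Matrix (Fin n) (Fin n) ℂ)
    (hPherm : P.IsHermitian) (hPproj : P * P = P)
    (hPrange : ∀ v : Fin n → ℂ,
      H.mulVec v = (((⨅ i, hH.eigenvalues i : ℝ) : ℂ)) • v ↔ P.mulVec v = v) :
    ∀ x y, (P x y).im = 0 ∧ 0 ≤ (P x y).re := by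
  rcases isEmpty_or_nonempty (Fin n) with _ | _
  · exact isEmptyElim
  have hP : P = hH.eigenProj (⨅ i, hH.eigenvalues i) :=
    IsStarProjection.eq_of_mulVec_eq_self_iff ⟨hPproj, hPherm.isSelfAdjoint⟩
      (hH.isStarProjection_eigenProj _) fun v =>
        (hPrange v).symm.trans (hH.eigenProj_mulVec_eq_self_iff _ v).symm
  intro x y
  have hPxy : 0 ≤ P x y := hP ▸ hH.eigenProj_iInf_apply_nonneg
    (fun x y hxy => Complex.le_def.2 ⟨(hoff x y hxy).2, (hoff x y hxy).1⟩) x y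
  exact ⟨(Complex.nonneg_iff.1 hPxy).2.symm, (Complex.nonneg_iff.1 hPxy).1⟩

/-- If `H` is Hermitian with real non-positive off-diagonal entries,
then the spectral projector `P` onto the eigenspace of the smallest eigenvalue of `H`
has real non-negative entries. -/
theorem stmt_0 {n : ℕ} (hn : 0 < n) (H : Matrix (Fin n) (Fin n) ℂ)
    (hH : H.IsHermitian)
    (hoff : ∀ x y, x ≠ y → (H x y).im = 0 ∧ (H x y).re ≤ 0)
    (P : Matrix (Fin n) (Fin n) ℂ)
    (hPherm : P.IsHermitian) (hPproj : P * P = P)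
    (hPrange : ∀ v : Fin n → ℂ,
      H.mulVec v = (((⨅ i, hH.eigenvalues i : ℝ) : ℂ)) • v ↔ P.mulVec v = v) :
    ∀ x y, (P x y).im = 0 ∧ 0 ≤ (P x y).re :=
  stmt_0_general H hH hoff P hPherm hPproj hPrange
end

section
/- For any β ≥ 0 and any Hermitian matrix H with non-positive off-diagonal entries, the matrix exponential exp(-βH) has all entries real and non-negative. -/
/-!
Since `H` is Hermitian with real off-diagonal entries, `-βH` is a real matrix with non-negative
off-diagonal entries, so `-βH + b` is entrywise non-negative for a large enough real `b`. The
exponential of an entrywise non-negative matrix is entrywise non-negative (every term of its power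
series is), and the scalar `b` commutes with everything, so `exp(-βH) = e^{-b} exp(-βH + b)` is
entrywise non-negative as well.
-/

open NormedSpace

namespace Matrix

variable {ι : Type*} [Fintype ι] [DecidableEq ι]

theorem exp_apply_nonneg {A : Matrix ι ι ℝ} (hA : ∀ i j, 0 ≤ A i j) (i j : ι) :
    0 ≤ exp A i j := by
  open scoped Norms.Operator in
  exact (Pi.hasSum.mp (Pi.hasSum.mp (exp_series_hasSum_exp' (𝕂 := ℝ) A) i) j).nonneg fun k =>
    mul_nonneg (by positivity) (pow_apply_nonneg hA k i j)

theorem exp_scalar (b : ℝ) : exp (scalar ι b) = scalar ι (Real.exp b) := by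
  simp only [scalar_apply, exp_diagonal]
  congr 1
  ext
  simp [Real.exp_eq_exp_ℝ]

theorem exp_apply_nonneg_of_offDiag_nonneg {M : Matrix ι ι ℝ}
    (hM : ∀ i j, i ≠ j → 0 ≤ M i j) (i j : ι) : 0 ≤ exp M i j := by
  obtain ⟨b, hb⟩ := (Set.finite_range fun i => M i i).bddBelow
  have hshift : ∀ i j, 0 ≤ (M - scalar ι b) i j := by
    intro i j
    rcases eq_or_ne i j with rfl | hij
    · simpa using hb ⟨i, rfl⟩
    · simpa [hij] using hM i j hij
  have hexp : exp M = scalar ι (Real.exp b) * exp (M - scalar ι b) := by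
    rw [← exp_scalar, ← exp_add_of_commute _ _ (scalar_commute b (fun _ => .all _ _) _),
      add_sub_cancel]
  rw [hexp, scalar_apply, diagonal_mul]
  exact mul_nonneg (Real.exp_nonneg b) (exp_apply_nonneg hshift i j)

theorem exp_map_algebraMap {𝕜 : Type*} [RCLike 𝕜] (M : Matrix ι ι ℝ) :
    (exp M).map (algebraMap ℝ 𝕜) = exp (M.map (algebraMap ℝ 𝕜)) := by
  open scoped Norms.Operator in
  exact map_exp (RingHom.mapMatrix (algebraMap ℝ 𝕜))
    (continuous_id.matrix_map (continuous_algebraMap ℝ 𝕜)) M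

end Matrix

open NormedSpace in
/-- For any `β ≥ 0` and Hermitian `H` with real non-positive off-diagonal
entries, the matrix exponential `exp(-βH)` has real non-negative entries. -/
theorem stmt_1 {n : ℕ} (H : Matrix (Fin n) (Fin n) ℂ)
    (hH : H.IsHermitian)
    (hoff : ∀ x y, x ≠ y → (H x y).im = 0 ∧ (H x y).re ≤ 0)
    (β : ℝ) (hβ : 0 ≤ β) :
    ∀ x y, ((exp (-((β : ℂ) • H))) x y).im = 0 ∧
      0 ≤ ((exp (-((β : ℂ) • H))) x y).re := by
  have hreal : ∀ x y, ((H x y).re : ℂ) = H x y := by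
    intro x y
    rcases eq_or_ne x y with rfl | hxy
    · exact hH.coe_re_apply_self x
    · exact Complex.ext rfl (by simp [(hoff x y hxy).1])
  set M : Matrix (Fin n) (Fin n) ℝ := -(β • H.map Complex.re)
  have hM : -((β : ℂ) • H) = M.map (algebraMap ℝ ℂ) := by
    ext x y
    conv_lhs => rw [Matrix.neg_apply, Matrix.smul_apply, ← hreal x y]
    simp [M]
  have hMoff : ∀ x y, x ≠ y → 0 ≤ M x y := fun x y hxy => by
    simpa [M] using mul_nonpos_of_nonneg_of_nonpos hβ (hoff x y hxy).2
  intro x y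
  rw [hM, ← Matrix.exp_map_algebraMap]
  exact ⟨Complex.ofReal_im _, Matrix.exp_apply_nonneg_of_offDiag_nonneg hMoff x y⟩
end

section
/- Any Hermitian projector Π of rank q with non-negative entries in the standard basis can be written as Π = Σ_{a=1}^q |ψ_a⟩⟨ψ_a| where the ψ_a are pairwise orthonormal unit vectors with non-negative real entries supported on pairwise disjoint sets of basis indices. -/
/-!
For `R = Re P`, idempotence and non-negativity give `R i j * R j k ≤ R i k`, so `0 < R i j` is
an equivalence relation on `{i | 0 < R i i}`, and `R` vanishes between different classes
(blocks). On each block `R` has rank one, by a minimum-ratio argument that replaces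
Perron–Frobenius, so `R = ∑ ψ_c ψ_cᵀ` where `ψ_c` is the normalised column of a representative
of the block `c`. These `ψ_c` are non-negative, orthonormal and disjointly supported, and
orthonormality makes the number of blocks equal to `rank P`.
-/

open Finset Matrix

structure Matrix.IsNonnegProjection {n : Type*} [Fintype n] (R : Matrix n n ℝ) : Prop where
  isSymm : R.IsSymm
  mul_self : R * R = R
  nonneg : ∀ i j, 0 ≤ R i j

namespace Matrix.IsNonnegProjection

variable {n : Type*} [Fintype n] {R : Matrix n n ℝ} {i j k : n}

theorem apply_comm (hR : R.IsNonnegProjection) (i j : n) : R j i = R i j :=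
  hR.isSymm.apply i j

theorem apply_eq_sum (hR : R.IsNonnegProjection) (i j : n) : R i j = ∑ k, R i k * R k j := by
  conv_lhs => rw [← hR.mul_self]
  exact mul_apply

theorem mul_le_apply (hR : R.IsNonnegProjection) (i j k : n) : R i k * R k j ≤ R i j := by
  rw [hR.apply_eq_sum i j]
  exact single_le_sum (fun l _ => mul_nonneg (hR.nonneg i l) (hR.nonneg l j)) (mem_univ k)

theorem apply_pos_trans (hR : R.IsNonnegProjection) (hij : 0 < R i j) (hjk : 0 < R j k) :
    0 < R i k :=
  (mul_pos hij hjk).trans_le (hR.mul_le_apply i k j)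

theorem diag_pos_of_apply_pos (hR : R.IsNonnegProjection) (hij : 0 < R i j) : 0 < R i i :=
  hR.apply_pos_trans hij (by rwa [hR.apply_comm])

theorem eq_zero_of_not_pos (hR : R.IsNonnegProjection) (h : ¬ 0 < R i j) : R i j = 0 :=
  le_antisymm (not_lt.1 h) (hR.nonneg i j)

theorem eq_zero_of_mulVec_eq (hR : R.IsNonnegProjection) {u : n → ℝ} (hu : 0 ≤ u)
    (hfix : R *ᵥ u = u) (hk : u k = 0) {l : n} (hkl : 0 < R k l) : u l = 0 := by
  have hsum : ∑ m, R k m * u m = 0 := (congrFun hfix k).trans hk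
  have hterm := (sum_eq_zero_iff_of_nonneg fun m _ => mul_nonneg (hR.nonneg k m) (hu m)).1
    hsum l (mem_univ l)
  exact (mul_eq_zero.1 hterm).resolve_left hkl.ne'

theorem mulVec_col (hR : R.IsNonnegProjection) (j : n) :
    R *ᵥ (fun w => R w j) = fun w => R w j := by
  ext w
  exact (hR.apply_eq_sum w j).symm

/-- Columns `i` and `j` with `0 < R i j` are proportional. Subtracting from column `j` the
largest multiple of column `i` that keeps it non-negative leaves a non-negative fixed vector of
`R` with a zero inside the block, so it vanishes by `eq_zero_of_mulVec_eq`. -/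
theorem apply_mul_diag_eq_of_pos (hR : R.IsNonnegProjection) (hij : 0 < R i j) (k : n) :
    R k j * R i i = R k i * R i j := by
  classical
  set C := univ.filter fun w => 0 < R i w
  have hiC : i ∈ C := by simpa [C] using hR.diag_pos_of_apply_pos hij
  have hC {w} (hw : w ∈ C) : 0 < R w i := by
    rw [hR.apply_comm]; simpa [C] using hw
  have hnotC {w} (hw : w ∉ C) : R w i = 0 ∧ R w j = 0 := by
    have hwi : R w i = 0 := by
      rw [hR.apply_comm]; exact hR.eq_zero_of_not_pos (by simpa [C] using hw)
    refine ⟨hwi, hR.eq_zero_of_not_pos fun hwj => ?_⟩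
    exact (hR.apply_pos_trans hwj (by rwa [hR.apply_comm])).ne' hwi
  obtain ⟨z, hzC, hzmin⟩ := exists_min_image C (fun w => R w j / R w i) ⟨i, hiC⟩
  set t := R z j / R z i
  set u : n → ℝ := (fun w => R w j) - t • fun w => R w i
  have hu_apply (w : n) : u w = R w j - t * R w i := rfl
  have hu : 0 ≤ u := fun w => by
    by_cases hw : w ∈ C
    · have := (le_div_iff₀ (hC hw)).1 (hzmin w hw)
      rw [hu_apply, Pi.zero_apply]; linarith
    · simp [hu_apply, hnotC hw]
  have hfix : R *ᵥ u = u := by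
    rw [mulVec_sub, mulVec_smul, hR.mulVec_col, hR.mulVec_col]
  have hz : u z = 0 := by
    rw [hu_apply, div_mul_cancel₀ _ (hC hzC).ne', sub_self]
  have hu0 (w : n) : u w = 0 := by
    by_cases hw : w ∈ C
    · exact hR.eq_zero_of_mulVec_eq hu hfix hz
        (hR.apply_pos_trans (hC hzC) (by simpa [C] using hw))
    · simp [hu_apply, hnotC hw]
  have hk : R k j = t * R k i := sub_eq_zero.1 ((hu_apply k).symm.trans (hu0 k))
  have hi : R i j = t * R i i := sub_eq_zero.1 ((hu_apply i).symm.trans (hu0 i))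
  rw [hk, hi]; ring

def blockSetoid (hR : R.IsNonnegProjection) : Setoid {i // 0 < R i i} where
  r i j := 0 < R i j
  iseqv := ⟨fun i => i.2, fun h => by rwa [hR.apply_comm], hR.apply_pos_trans⟩

def Block (hR : R.IsNonnegProjection) : Type _ := Quotient hR.blockSetoid

noncomputable instance (hR : R.IsNonnegProjection) : Fintype hR.Block :=
  @Fintype.ofFinite _ (Quotient.finite _)

noncomputable instance (hR : R.IsNonnegProjection) : DecidableEq hR.Block :=
  Classical.decEq _

variable {hR : R.IsNonnegProjection}

noncomputable def Block.rep (c : hR.Block) : n := (Quotient.out c : {i // 0 < R i i})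

theorem Block.diag_rep_pos (c : hR.Block) : 0 < R c.rep c.rep := (Quotient.out c).2

theorem Block.mk_eq_of_apply_rep_pos (c : hR.Block) (hk : 0 < R k c.rep) :
    (Quotient.mk _ ⟨k, hR.diag_pos_of_apply_pos hk⟩ : hR.Block) = c :=
  (Quotient.sound hk).trans (Quotient.out_eq c)

theorem Block.apply_rep_pos_of_mk_eq (c : hR.Block) (hk : 0 < R k k)
    (h : (Quotient.mk _ ⟨k, hk⟩ : hR.Block) = c) : 0 < R c.rep k := by
  subst h; exact Quotient.mk_out (s := hR.blockSetoid) ⟨k, hk⟩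

theorem Block.apply_rep_eq_zero_of_ne {c d : hR.Block} (hcd : c ≠ d) (k : n) :
    R k c.rep = 0 ∨ R k d.rep = 0 := by
  by_contra! ⟨hc, hd⟩
  replace hc := (hR.nonneg _ _).lt_of_ne' hc
  replace hd := (hR.nonneg _ _).lt_of_ne' hd
  exact hcd ((c.mk_eq_of_apply_rep_pos hc).symm.trans (d.mk_eq_of_apply_rep_pos hd))

variable (hR) in
noncomputable def blockMatrix : Matrix n hR.Block ℝ :=
  of fun k c => R k c.rep / √(R c.rep c.rep)

theorem blockMatrix_nonneg (k : n) (c : hR.Block) : 0 ≤ hR.blockMatrix k c :=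
  div_nonneg (hR.nonneg _ _) (Real.sqrt_nonneg _)

theorem blockMatrix_eq_zero_of_ne {c d : hR.Block} (hcd : c ≠ d) (k : n) :
    hR.blockMatrix k c = 0 ∨ hR.blockMatrix k d = 0 := by
  rcases Block.apply_rep_eq_zero_of_ne hcd k with h | h <;> simp [blockMatrix, h]

theorem blockMatrix_mul_apply (i j : n) (c : hR.Block) :
    hR.blockMatrix i c * hR.blockMatrix j c = R i c.rep * R j c.rep / R c.rep c.rep := by
  rw [blockMatrix, of_apply, of_apply, div_mul_div_comm, Real.mul_self_sqrt c.diag_rep_pos.le]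

theorem transpose_blockMatrix_mul_self : (hR.blockMatrix)ᵀ * hR.blockMatrix = 1 := by
  ext c d
  rw [mul_apply, one_apply]
  simp only [transpose_apply]
  split_ifs with hcd
  · subst hcd
    have hsum : ∑ k, R k c.rep * R k c.rep = R c.rep c.rep := by
      rw [hR.apply_eq_sum c.rep c.rep]; simp only [hR.apply_comm]
    simp_rw [blockMatrix_mul_apply, ← sum_div, hsum, div_self c.diag_rep_pos.ne']
  · refine sum_eq_zero fun k _ => ?_
    rcases blockMatrix_eq_zero_of_ne hcd k with h | h <;> simp [h]

theorem blockMatrix_mul_transpose : hR.blockMatrix * (hR.blockMatrix)ᵀ = R := by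
  ext i j
  rw [mul_apply]
  simp only [transpose_apply, blockMatrix_mul_apply]
  by_cases hij : 0 < R i j
  · set c : hR.Block := Quotient.mk _ ⟨i, hR.diag_pos_of_apply_pos hij⟩
    have hci : 0 < R c.rep i := c.apply_rep_pos_of_mk_eq _ rfl
    have hcj : 0 < R c.rep j := hR.apply_pos_trans hci hij
    rw [sum_eq_single c]
    · rw [hR.apply_comm c.rep j, ← hR.apply_mul_diag_eq_of_pos hcj i]
      exact mul_div_cancel_right₀ _ c.diag_rep_pos.ne'
    · intro d _ hdc
      have : R i d.rep = 0 := hR.eq_zero_of_not_pos fun hd =>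
        hdc ((d.mk_eq_of_apply_rep_pos hd).symm)
      simp [this]
    · simp
  · rw [hR.eq_zero_of_not_pos hij]
    refine sum_eq_zero fun c _ => ?_
    by_contra h
    obtain ⟨hic, hjc⟩ := mul_ne_zero_iff.1 (div_ne_zero_iff.1 h).1
    exact hij (hR.apply_pos_trans ((hR.nonneg _ _).lt_of_ne' hic)
      (by rw [hR.apply_comm]; exact (hR.nonneg _ _).lt_of_ne' hjc))

end Matrix.IsNonnegProjection

theorem Matrix.rank_mul_conjTranspose_of_conjTranspose_mul_eq_one {m n 𝕜 : Type*} [Fintype m]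
    [Fintype n] [DecidableEq n] [Field 𝕜] [PartialOrder 𝕜] [StarRing 𝕜] [StarOrderedRing 𝕜]
    {A : Matrix m n 𝕜} (h : Aᴴ * A = 1) : (A * Aᴴ).rank = Fintype.card n := by
  rw [rank_self_mul_conjTranspose, ← rank_conjTranspose_mul_self, h, rank_one]

theorem Matrix.map_ofReal_mul {l m n : Type*} [Fintype m] (A : Matrix l m ℝ)
    (B : Matrix m n ℝ) :
    (A * B).map ((↑) : ℝ → ℂ) = A.map ((↑) : ℝ → ℂ) * B.map ((↑) : ℝ → ℂ) :=
  Matrix.map_mul (f := Complex.ofRealHom)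

theorem Matrix.conjTranspose_map_ofReal {m n : Type*} (A : Matrix m n ℝ) :
    (A.map ((↑) : ℝ → ℂ))ᴴ = Aᵀ.map (↑) := by
  ext; simp

theorem Matrix.map_re_map_ofReal {n : Type*} {P : Matrix n n ℂ} (hreal : ∀ i j, (P i j).im = 0) :
    (P.map Complex.re).map (↑) = P := by
  ext i j; exact Complex.ext (by simp) (by simp [hreal])

theorem Matrix.isNonnegProjection_map_re {n : Type*} [Fintype n] {P : Matrix n n ℂ}
    (hherm : P.IsHermitian) (hproj : P * P = P)
    (hnonneg : ∀ x y, (P x y).im = 0 ∧ 0 ≤ (P x y).re) :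
    (P.map Complex.re).IsNonnegProjection where
  isSymm := by
    ext i j; simp [← hherm.apply i j]
  mul_self := by
    set R := P.map Complex.re
    have hRP : R.map (↑) = P := map_re_map_ofReal fun i j => (hnonneg i j).1
    have : (R * R).map ((↑) : ℝ → ℂ) = R.map (↑) := by rw [map_ofReal_mul, hRP, hproj]
    exact map_injective Complex.ofReal_injective this
  nonneg i j := (hnonneg i j).2

/-- Any Hermitian projector `P` of rank `q` with non-negative entries
decomposes as `P = ∑_{a} |ψ_a⟩⟨ψ_a|` where the `ψ_a` are orthonormal vectors with
real non-negative entries supported on pairwise disjoint sets of basis indices. -/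
theorem stmt_4 {N q : ℕ} (P : Matrix (Fin N) (Fin N) ℂ)
    (hherm : P.IsHermitian) (hproj : P * P = P)
    (hnonneg : ∀ x y, (P x y).im = 0 ∧ 0 ≤ (P x y).re)
    (hrank : P.rank = q) :
    ∃ ψ : Fin q → (Fin N → ℂ),
      (∀ a x, ((ψ a) x).im = 0 ∧ 0 ≤ ((ψ a) x).re) ∧
      (∀ a b, ∑ x, (starRingEnd ℂ) (ψ a x) * ψ b x = if a = b then 1 else 0) ∧
      (∀ a b, a ≠ b → ∀ x, ψ a x = 0 ∨ ψ b x = 0) ∧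
      P = ∑ a, Matrix.vecMulVec (ψ a) (fun x => (starRingEnd ℂ) (ψ a x)) := by
  have hR := isNonnegProjection_map_re hherm hproj hnonneg
  have horth :
      (hR.blockMatrix.map ((↑) : ℝ → ℂ))ᴴ * hR.blockMatrix.map ((↑) : ℝ → ℂ) = 1 := by
    rw [conjTranspose_map_ofReal, ← map_ofReal_mul,
      IsNonnegProjection.transpose_blockMatrix_mul_self, Matrix.map_one _ (by simp) (by simp)]
  have hP : P = hR.blockMatrix.map ((↑) : ℝ → ℂ) * (hR.blockMatrix.map ((↑) : ℝ → ℂ))ᴴ := by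
    rw [conjTranspose_map_ofReal, ← map_ofReal_mul,
      IsNonnegProjection.blockMatrix_mul_transpose]
    exact (map_re_map_ofReal fun i j => (hnonneg i j).1).symm
  have hcard : Fintype.card hR.Block = q := by
    open scoped ComplexOrder in
    rw [← rank_mul_conjTranspose_of_conjTranspose_mul_eq_one horth, ← hP, hrank]
  set e : Fin q ≃ hR.Block := (Fintype.equivFinOfCardEq hcard).symm
  refine ⟨fun a x => (hR.blockMatrix x (e a) : ℂ), fun a x => ?_, fun a b => ?_,
    fun a b hab x => ?_, ?_⟩
  · exact ⟨Complex.ofReal_im _, IsNonnegProjection.blockMatrix_nonneg x (e a)⟩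
  · have h := congrFun (congrFun horth (e a)) (e b)
    simp only [mul_apply, one_apply, e.injective.eq_iff] at h
    simpa using h
  · rcases IsNonnegProjection.blockMatrix_eq_zero_of_ne (e.injective.ne hab) x with h | h <;>
      simp [h]
  · refine hP.trans (ext fun i j => ?_)
    rw [mul_apply, Matrix.sum_apply, ← e.sum_comp]
    simp [vecMulVec_apply]
end

section
/- Let Π be a Hermitian projector with non-negative entries and ψ a non-negative vector with Πψ = ψ. If x is in the support of ψ and ⟨x|Π|y⟩ > 0 for some basis index y, then y is also in the support of ψ and ψ(y)/ψ(x) = sqrt(⟨y|Π|y⟩/⟨x|Π|x⟩). -/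
/-!
Everything happens for the real matrix `A = Re P`, which is symmetric, idempotent and entrywise
non-negative. Idempotency gives `A i k ≥ A i j * A j k`, so positivity of entries propagates, and
each row `A x` is itself a non-negative fixed vector. Subtracting from a non-negative fixed vector
`f` the largest multiple `s • A x` that stays non-negative leaves a fixed vector vanishing somewhere
on the support of `A x`; its zero spreads along positive entries, so `f = s • A x` on that
support. Applied to `f = ψ` this gives `ψ y / ψ x = A x y / A x x`, and applied to `f = A y` it
gives `A y y = (A x y)² / A x x`.
-/

open Finset

namespace Matrix

variable {n : Type*} [Fintype n]

lemma mulVec_row_eq_self {R : Type*} [CommSemiring R] {A : Matrix n n R} (hsymm : A.IsSymm)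
    (hAA : A * A = A) (x : n) : A *ᵥ A x = A x := by
  ext u
  calc (A *ᵥ A x) u = (A * A) u x := by
        simp only [mulVec, dotProduct, mul_apply, hsymm.apply]
    _ = A x u := by rw [hAA, hsymm.apply]

lemma mul_apply_le_of_mul_self {R : Type*} [CommSemiring R] [PartialOrder R] [IsOrderedRing R]
    {A : Matrix n n R} (hA : ∀ i j, 0 ≤ A i j) (hAA : A * A = A) (i j k : n) :
    A i j * A j k ≤ A i k := by
  conv_rhs => rw [← hAA, mul_apply]
  exact single_le_sum (f := fun l => A i l * A l k)
    (fun l _ => mul_nonneg (hA i l) (hA l k)) (mem_univ j)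

lemma eq_zero_of_mulVec_eq_self {R : Type*} [CommSemiring R] [PartialOrder R] [IsOrderedRing R]
    [NoZeroDivisors R] {A : Matrix n n R} {g : n → R} (hA : ∀ i j, 0 ≤ A i j) (hg : 0 ≤ g)
    (hAg : A *ᵥ g = g) {i j : n} (hgi : g i = 0) (hij : 0 < A i j) : g j = 0 := by
  have hsum : ∑ k, A i k * g k = 0 := by rw [← hgi, ← congrFun hAg i]; rfl
  have hterm := (sum_eq_zero_iff_of_nonneg fun k _ => mul_nonneg (hA i k) (hg k)).1 hsum j
    (mem_univ j)
  exact (mul_eq_zero.1 hterm).resolve_left hij.ne'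

lemma exists_eq_mul_row_of_mulVec_eq_self {R : Type*} [Field R] [LinearOrder R]
    [IsStrictOrderedRing R] {A : Matrix n n R} (hsymm : A.IsSymm) (hA : ∀ i j, 0 ≤ A i j)
    (hAA : A * A = A) {f : n → R} (hf : 0 ≤ f) (hAf : A *ᵥ f = f) (x : n) :
    ∃ s : R, ∀ k, 0 < A x k → f k = s * A x k := by
  classical
  set B := univ.filter fun k => 0 < A x k
  rcases B.eq_empty_or_nonempty with hB | hB
  · exact ⟨0, fun k hk => absurd (filter_eq_empty_iff.1 hB (mem_univ k)) (not_not.2 hk)⟩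
  -- the largest `s` with `s • A x ≤ f` leaves a non-negative fixed vector with a zero on `B`
  obtain ⟨u, huB, hmin⟩ := B.exists_min_image (fun k => f k / A x k) hB
  have hxu : 0 < A x u := (mem_filter.1 huB).2
  set z := f - (f u / A x u) • A x
  have hz : 0 ≤ z := fun k => by
    have hfk : 0 ≤ f k := hf k
    rcases (hA x k).eq_or_lt with h | h
    · simpa [z, ← h] using hfk
    · have := (le_div_iff₀ h).1 (hmin k (mem_filter.2 ⟨mem_univ k, h⟩))
      simp only [z, Pi.sub_apply, Pi.smul_apply, smul_eq_mul, Pi.zero_apply]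
      linarith
  have hAz : A *ᵥ z = z := by
    rw [mulVec_sub, mulVec_smul, hAf, mulVec_row_eq_self hsymm hAA]
  have hzu : z u = 0 := by
    simp only [z, Pi.sub_apply, Pi.smul_apply, smul_eq_mul]
    field_simp
    ring
  refine ⟨f u / A x u, fun k hk => ?_⟩
  have hux : 0 < A u x := hsymm.apply x u ▸ hxu
  have huk : 0 < A u k :=
    (mul_pos hux hk).trans_le (mul_apply_le_of_mul_self hA hAA u x k)
  have := eq_zero_of_mulVec_eq_self hA hz hAz hzu huk
  simp only [z, Pi.sub_apply, Pi.smul_apply, smul_eq_mul] at this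
  linarith

theorem apply_pos_and_div_eq_sqrt_of_mulVec_eq_self {A : Matrix n n ℝ} (hsymm : A.IsSymm)
    (hA : ∀ i j, 0 ≤ A i j) (hAA : A * A = A) {f : n → ℝ} (hf : 0 ≤ f) (hAf : A *ᵥ f = f)
    {x y : n} (hfx : 0 < f x) (hxy : 0 < A x y) :
    0 < f y ∧ f y / f x = √(A y y / A x x) := by
  have hyx : A y x = A x y := hsymm.apply x y
  have hxx : 0 < A x x :=
    (mul_pos hxy (hyx ▸ hxy)).trans_le (mul_apply_le_of_mul_self hA hAA x y x)
  obtain ⟨s, hs⟩ := exists_eq_mul_row_of_mulVec_eq_self hsymm hA hAA hf hAf x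
  obtain ⟨t, ht⟩ := exists_eq_mul_row_of_mulVec_eq_self hsymm hA hAA (fun k => hA y k)
    (mulVec_row_eq_self hsymm hAA y) x
  have hsx := hs x hxx
  have hsy := hs y hxy
  have hty := ht y hxy
  have htx := ht x hxx
  have hs_pos : 0 < s := pos_of_mul_pos_left (hsx ▸ hfx) hxx.le
  refine ⟨hsy ▸ mul_pos hs_pos hxy, ?_⟩
  have ht_eq : t = A x y / A x x := by rw [eq_div_iff hxx.ne', ← htx, hyx]
  calc f y / f x = A x y / A x x := by rw [hsy, hsx]; field_simp
    _ = √((A x y / A x x) ^ 2) := (Real.sqrt_sq (by positivity)).symm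
    _ = √(A y y / A x x) := by rw [hty, ht_eq]; ring_nf

end Matrix

/-- If `P` is a Hermitian projector with non-negative entries, `ψ` a
non-negative vector with `Pψ = ψ`, `x` in the support of `ψ` and `⟨x|P|y⟩ > 0`, then
`y` is in the support of `ψ` and `ψ(y)/ψ(x) = sqrt(⟨y|P|y⟩/⟨x|P|x⟩)`. -/
theorem stmt_6 {N : ℕ} (P : Matrix (Fin N) (Fin N) ℂ)
    (hherm : P.IsHermitian) (hproj : P * P = P)
    (hnonneg : ∀ x y, (P x y).im = 0 ∧ 0 ≤ (P x y).re)
    (ψ : Fin N → ℂ) (hψ : ∀ x, (ψ x).im = 0 ∧ 0 ≤ (ψ x).re)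
    (hfix : P.mulVec ψ = ψ)
    (x y : Fin N) (hx : 0 < (ψ x).re) (hxy : 0 < (P x y).re) :
    0 < (ψ y).re ∧ (ψ y).re / (ψ x).re = Real.sqrt ((P y y).re / (P x x).re) := by
  set A := P.map Complex.re
  set f := Complex.re ∘ ψ
  have hPA : P = A.map Complex.ofRealHom := by
    ext i j
    exact Complex.ext rfl (hnonneg i j).1
  have hψf : ψ = Complex.ofRealHom ∘ f := by
    ext i
    exact Complex.ext rfl (hψ i).1
  have hsymm : A.IsSymm := by
    rw [← Matrix.isHermitian_iff_isSymm, ← Matrix.isHermitian_map_iff (f := Complex.ofRealHom)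
      (fun r => by simp) Complex.ofReal_injective, ← hPA]
    exact hherm
  have hAA : A * A = A := by
    apply Matrix.map_injective (f := Complex.ofRealHom) Complex.ofReal_injective
    simp only [Matrix.map_mul, ← hPA, hproj]
  have hAf : A.mulVec f = f := by
    ext i
    apply Complex.ofReal_injective
    rw [← Complex.ofRealHom_eq_coe, RingHom.map_mulVec, ← hPA, ← hψf, hfix, hψf]
    rfl
  exact Matrix.apply_pos_and_div_eq_sqrt_of_mulVec_eq_self hsymm (fun i j => (hnonneg i j).2) hAA
    (fun i => (hψ i).2) hAf hx hxy
end

section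
/- Let H = Σ_a H_a where each H_a is positive semidefinite Hermitian with non-positive off-diagonal entries, and suppose Hψ = 0 for a non-negative unit vector ψ (hence H_a ψ = 0 for all a). Let Π_a project onto ker(H_a). If x is in the support of ψ and ⟨y|H_a|x⟩ < 0 for some a and some basis index y, then y is in the support of ψ and ψ(y)/ψ(x) = sqrt(⟨y|Π_a|y⟩/⟨x|Π_a|x⟩). -/
/-!
Each `H a` is positive semidefinite, so `H ψ = 0` forces `H a ψ = 0`. For a positive
semidefinite `A` with real non-positive off-diagonal entries, replacing a vector by its entrywise
modulus does not increase the quadratic form, so `ker A` is closed under `v ↦ |v|`; and a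
non-negative kernel vector that is positive at `x` is positive at every `y` with `A y x < 0`.
Applied to `|u x • v - v x • u|`, which vanishes at `x`, this shows that any two kernel vectors
satisfy `u x * v y = u y * v x`. The columns of `P a` lie in `ker (H a)`, so the rows `y` and `x`
of `P a` are proportional with factor `ψ y / ψ x`, and `P i i = ∑ j, |P i j|²` turns this into
the ratio of the diagonal entries.
-/

namespace Matrix

open scoped ComplexOrder

variable {ι : Type*}

theorem PosSemidef.mulVec_eq_zero_of_sum_mulVec_eq_zero {𝕜 κ : Type*} [RCLike 𝕜] [Fintype κ]
    [Fintype ι] {H : κ → Matrix ι ι 𝕜} (hH : ∀ a, (H a).PosSemidef) {v : ι → 𝕜}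
    (hv : (∑ a, H a) *ᵥ v = 0) (a : κ) : H a *ᵥ v = 0 := by
  have hsum : ∑ b, star v ⬝ᵥ H b *ᵥ v = 0 := by
    rw [← dotProduct_sum, ← sum_mulVec, hv, dotProduct_zero]
  refine ((hH a).dotProduct_mulVec_zero_iff v).1 ?_
  exact (Finset.sum_eq_zero_iff_of_nonneg fun b _ => (hH b).dotProduct_mulVec_nonneg v).1 hsum a
    (Finset.mem_univ a)

def IsStoquastic (A : Matrix ι ι ℂ) : Prop :=
  ∀ i j, i ≠ j → (A i j).im = 0 ∧ (A i j).re ≤ 0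

variable {A : Matrix ι ι ℂ}

theorem IsStoquastic.norm_mul_norm_mul_re_le (hA : A.IsStoquastic) (v : ι → ℂ) (i j : ι) :
    ‖v i‖ * ‖v j‖ * (A i j).re ≤ (star (v i) * (A i j * v j)).re := by
  obtain rfl | hij := eq_or_ne i j
  · have hv : star (v i) * (A i i * v i) = A i i * ((‖v i‖ ^ 2 : ℝ) : ℂ) := by
      rw [Complex.star_def, mul_left_comm, Complex.conj_mul', Complex.ofReal_pow]
    rw [hv, Complex.re_mul_ofReal]
    exact (by ring : ‖v i‖ * ‖v i‖ * (A i i).re = (A i i).re * ‖v i‖ ^ 2).le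
  · obtain ⟨him, hre⟩ := hA i j hij
    have hAij : A i j = ((A i j).re : ℂ) := Complex.ext rfl (by simp [him])
    have hv : star (v i) * (A i j * v j) = (A i j).re * (star (v i) * v j) := by
      rw [hAij, Complex.ofReal_re]; ring
    rw [hv, Complex.re_ofReal_mul, mul_comm _ (A i j).re]
    refine mul_le_mul_of_nonpos_left ?_ hre
    calc (star (v i) * v j).re ≤ ‖star (v i) * v j‖ := Complex.re_le_norm _
      _ = ‖v i‖ * ‖v j‖ := by rw [norm_mul, norm_star]

variable [Fintype ι]

theorem IsStoquastic.pos_of_mulVec_eq_zero (hA : A.IsStoquastic) {w : ι → ℂ}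
    (hw : A *ᵥ w = 0) (hw0 : ∀ i, 0 ≤ w i) {x y : ι} (hyx : (A y x).re < 0) (hx : 0 < w x) :
    0 < w y := by
  classical
  obtain rfl | hxy := eq_or_ne x y
  · exact hx
  have hterm : ∀ j, (A y j * w j).re = (A y j).re * (w j).re := fun j => by
    simp [Complex.mul_re, ← (Complex.nonneg_iff.1 (hw0 j)).2]
  have hrow : ∑ j, (A y j * w j).re = 0 := by
    simpa [mulVec, dotProduct] using congrArg Complex.re (congrFun hw y)
  have hx' : (A y x * w x).re < 0 := by
    rw [hterm]; exact mul_neg_of_neg_of_pos hyx (Complex.pos_iff.1 hx).1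
  have hrest : ∑ j ∈ (Finset.univ.erase y).erase x, (A y j * w j).re ≤ 0 := by
    refine Finset.sum_nonpos fun j hj => ?_
    rw [hterm]
    have hjy : y ≠ j := (Finset.ne_of_mem_erase (Finset.mem_of_mem_erase hj)).symm
    exact mul_nonpos_of_nonpos_of_nonneg (hA y j hjy).2 (Complex.nonneg_iff.1 (hw0 j)).1
  rw [← Finset.add_sum_erase _ _ (Finset.mem_univ y),
    ← Finset.add_sum_erase _ _ (Finset.mem_erase.2 ⟨hxy, Finset.mem_univ x⟩)] at hrow
  refine (hw0 y).lt_of_ne fun hy0 => ?_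
  rw [← hy0, mul_zero, Complex.zero_re] at hrow
  linarith

theorem IsStoquastic.mulVec_norm_eq_zero (hA : A.IsStoquastic) (hpsd : A.PosSemidef) {v : ι → ℂ}
    (hv : A *ᵥ v = 0) : A *ᵥ (fun i => (‖v i‖ : ℂ)) = 0 := by
  set w : ι → ℂ := fun i => (‖v i‖ : ℂ)
  have hquad : ∀ u : ι → ℂ, star u ⬝ᵥ A *ᵥ u = ∑ i, ∑ j, star (u i) * (A i j * u j) := fun u => by
    simp only [dotProduct, mulVec, Finset.mul_sum, Pi.star_apply]
  have hle : (star w ⬝ᵥ A *ᵥ w).re ≤ 0 := by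
    calc (star w ⬝ᵥ A *ᵥ w).re = ∑ i, ∑ j, ‖v i‖ * ‖v j‖ * (A i j).re := by
          simp only [hquad, Complex.re_sum, w, Complex.star_def, Complex.conj_ofReal,
            Complex.mul_re, Complex.ofReal_re, Complex.ofReal_im]
          simp only [mul_zero, sub_zero, mul_comm, mul_left_comm]
      _ ≤ (star v ⬝ᵥ A *ᵥ v).re := by
          simp only [hquad, Complex.re_sum]
          gcongr with i _ j _
          exact hA.norm_mul_norm_mul_re_le v i j
      _ = 0 := by rw [hv, dotProduct_zero, Complex.zero_re]
  refine (hpsd.dotProduct_mulVec_zero_iff w).1 ?_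
  obtain ⟨hre, him⟩ := Complex.nonneg_iff.1 (hpsd.dotProduct_mulVec_nonneg w)
  exact Complex.ext (le_antisymm hle hre) him.symm

theorem IsStoquastic.apply_eq_zero_of_mulVec_eq_zero (hA : A.IsStoquastic)
    (hpsd : A.PosSemidef) {x y : ι} (hyx : (A y x).re < 0) {d : ι → ℂ} (hd : A *ᵥ d = 0)
    (hdx : d x = 0) : d y = 0 := by
  have hxy : (A x y).re < 0 := by
    rwa [← hpsd.isHermitian.apply x y, Complex.star_def, Complex.conj_re]
  by_contra hdy
  have hpos := hA.pos_of_mulVec_eq_zero (hA.mulVec_norm_eq_zero hpsd hd)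
    (fun i => Complex.zero_le_real.2 (norm_nonneg _)) hxy
    (Complex.zero_lt_real.2 (norm_pos_iff.2 hdy))
  simp [hdx] at hpos

theorem IsStoquastic.apply_mul_apply_eq_of_mulVec_eq_zero (hA : A.IsStoquastic)
    (hpsd : A.PosSemidef) {x y : ι} (hyx : (A y x).re < 0) {u v : ι → ℂ} (hu : A *ᵥ u = 0)
    (hv : A *ᵥ v = 0) : u x * v y = u y * v x := by
  have hd : A *ᵥ (u x • v - v x • u) = 0 := by
    simp only [mulVec_sub, mulVec_smul, hu, hv, smul_zero, sub_self]
  have := hA.apply_eq_zero_of_mulVec_eq_zero hpsd hyx hd (by simp [mul_comm])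
  simpa [sub_eq_zero, mul_comm (v x)] using this

variable {P : Matrix ι ι ℂ}

theorem IsHermitian.re_apply_self_eq_sum_normSq (hP : P.IsHermitian) (hP2 : P * P = P) (i : ι) :
    (P i i).re = ∑ j, Complex.normSq (P i j) := by
  have h : P i i = ∑ j, P i j * star (P i j) := by
    conv_lhs => rw [← hP2, mul_apply]
    simp only [hP.apply]
  rw [h, Complex.re_sum]
  simp only [Complex.star_def, Complex.mul_conj, Complex.ofReal_re]

theorem IsHermitian.re_apply_self_pos (hP : P.IsHermitian) (hP2 : P * P = P) {v : ι → ℂ}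
    (hv : P *ᵥ v = v) {i : ι} (hvi : v i ≠ 0) : 0 < (P i i).re := by
  rw [hP.re_apply_self_eq_sum_normSq hP2]
  refine (Finset.sum_nonneg fun j _ => Complex.normSq_nonneg _).lt_of_ne fun h => hvi ?_
  have hrow : ∀ j, P i j = 0 := fun j => Complex.normSq_eq_zero.1
    ((Finset.sum_eq_zero_iff_of_nonneg fun j _ => Complex.normSq_nonneg _).1 h.symm j
      (Finset.mem_univ j))
  rw [← hv]
  simp [mulVec, dotProduct, hrow]

end Matrix

open Matrix

open scoped ComplexOrder in
theorem stmt_8_general {N M : ℕ} (H : Fin M → Matrix (Fin N) (Fin N) ℂ)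
    (hpsd : ∀ a, (H a).PosSemidef)
    (hoff : ∀ a x y, x ≠ y → ((H a) x y).im = 0 ∧ ((H a) x y).re ≤ 0)
    (ψ : Fin N → ℂ) (hψ : ∀ x, (ψ x).im = 0 ∧ 0 ≤ (ψ x).re)
    (hground : (∑ a, H a).mulVec ψ = 0)
    (P : Fin M → Matrix (Fin N) (Fin N) ℂ)
    (hPherm : ∀ a, (P a).IsHermitian) (hPproj : ∀ a, P a * P a = P a)
    (hPker : ∀ a, ∀ v : Fin N → ℂ, (H a).mulVec v = 0 ↔ (P a).mulVec v = v)
    (a : Fin M) (x y : Fin N) (hx : 0 < (ψ x).re) (hneg : ((H a) y x).re < 0) :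
    0 < (ψ y).re ∧
      (ψ y).re / (ψ x).re = Real.sqrt (((P a) y y).re / ((P a) x x).re) := by
  have hstoq : (H a).IsStoquastic := hoff a
  have hHψ := PosSemidef.mulVec_eq_zero_of_sum_mulVec_eq_zero hpsd hground a
  have hy : 0 < (ψ y).re := (Complex.pos_iff.1 <|
    hstoq.pos_of_mulVec_eq_zero hHψ (fun i => Complex.nonneg_iff.2 ⟨(hψ i).2, (hψ i).1.symm⟩)
      hneg (Complex.pos_iff.2 ⟨hx, (hψ x).1.symm⟩)).1
  have hcol (z : Fin N) : H a *ᵥ (fun i => P a i z) = 0 := by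
    refine (hPker a _).2 (funext fun i => ?_)
    simpa only [mulVec, dotProduct, mul_apply] using congrFun (congrFun (hPproj a) i) z
  have hrow (z : Fin N) : ψ x * P a y z = ψ y * P a x z :=
    hstoq.apply_mul_apply_eq_of_mulVec_eq_zero (hpsd a) hneg hHψ (hcol z)
  have hnormSq (i : Fin N) : Complex.normSq (ψ i) = (ψ i).re ^ 2 := by
    simp [Complex.normSq_apply, (hψ i).1, sq]
  have hdiag : (ψ x).re ^ 2 * (P a y y).re = (ψ y).re ^ 2 * (P a x x).re := by
    simp only [(hPherm a).re_apply_self_eq_sum_normSq (hPproj a), Finset.mul_sum, ← hnormSq,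
      ← Complex.normSq_mul, hrow]
  have hPxx : 0 < (P a x x).re := (hPherm a).re_apply_self_pos (hPproj a)
    ((hPker a ψ).1 hHψ) fun h => by simp [h] at hx
  refine ⟨hy, ?_⟩
  rw [show (P a y y).re / (P a x x).re = ((ψ y).re / (ψ x).re) ^ 2 by
    field_simp; linarith, Real.sqrt_sq (div_nonneg hy.le hx.le)]

open scoped ComplexOrder in
/-- Let `H = ∑ a, H a` with each `H a` positive semidefinite Hermitian with
real non-positive off-diagonal entries, and `ψ` a non-negative unit vector with `Hψ = 0`.
Let `P a` project onto `ker (H a)`. If `x` is in the support of `ψ` and `⟨y|H a|x⟩ < 0`,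
then `y` is in the support of `ψ` and `ψ(y)/ψ(x) = sqrt(⟨y|P a|y⟩/⟨x|P a|x⟩)`. -/
theorem stmt_8 {N M : ℕ} (H : Fin M → Matrix (Fin N) (Fin N) ℂ)
    (hpsd : ∀ a, (H a).PosSemidef)
    (hoff : ∀ a x y, x ≠ y → ((H a) x y).im = 0 ∧ ((H a) x y).re ≤ 0)
    (ψ : Fin N → ℂ) (hψ : ∀ x, (ψ x).im = 0 ∧ 0 ≤ (ψ x).re)
    (hunit : ∑ x, Complex.normSq (ψ x) = 1)
    (hground : (∑ a, H a).mulVec ψ = 0)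
    (P : Fin M → Matrix (Fin N) (Fin N) ℂ)
    (hPherm : ∀ a, (P a).IsHermitian) (hPproj : ∀ a, P a * P a = P a)
    (hPker : ∀ a, ∀ v : Fin N → ℂ, (H a).mulVec v = 0 ↔ (P a).mulVec v = v)
    (a : Fin M) (x y : Fin N) (hx : 0 < (ψ x).re) (hneg : ((H a) y x).re < 0) :
    0 < (ψ y).re ∧
      (ψ y).re / (ψ x).re = Real.sqrt (((P a) y y).re / ((P a) x x).re) :=
  stmt_8_general H hpsd hoff ψ hψ hground P hPherm hPproj hPker a x y hx hneg
end

section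
/- Let H₁ and H₂ be Hermitian matrices each having 0 as smallest eigenvalue, with unit ground states ψ₁ (H₁ψ₁ = 0) and ψ₂ (H₂ψ₂ = 0). Suppose the spectral gap of H₁ (its smallest nonzero eigenvalue) is at least Δ > 0 and ‖H₁ − H₂‖ ≤ ε (operator norm). Then |⟨ψ₂|ψ₁⟩| ≥ 1 − ε²/Δ². -/
/-!
Split `w = ⟪u, w⟫ • u + v` with `v ⊥ u`, so that `‖v‖² = 1 - |⟪u, w⟫|²`. Since `T u = 0`, we get
`T v = T w`, and for `T = H₁`, `w = ψ₂` this is `(H₁ - H₂) ψ₂`. The gap then gives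
`Δ² (1 - |⟪u, w⟫|²) ≤ ‖T v‖² ≤ ε²`, and `|⟪u, w⟫| ≥ |⟪u, w⟫|²` because the overlap is at most `1`.
-/

open scoped InnerProductSpace

section Overlap

variable {𝕜 E F : Type*} [RCLike 𝕜] [NormedAddCommGroup E] [InnerProductSpace 𝕜 E]
  [NormedAddCommGroup F] [NormedSpace 𝕜 F]

theorem inner_sub_inner_smul_self_eq_zero {u : E} (hu : ‖u‖ = 1) (w : E) :
    ⟪u, w - ⟪u, w⟫_𝕜 • u⟫_𝕜 = 0 := by
  rw [inner_sub_right, inner_smul_right, inner_self_eq_norm_sq_to_K, hu]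
  simp

theorem norm_sub_inner_smul_sq {u : E} (hu : ‖u‖ = 1) (w : E) :
    ‖w - ⟪u, w⟫_𝕜 • u‖ ^ 2 = ‖w‖ ^ 2 - ‖⟪u, w⟫_𝕜‖ ^ 2 := by
  have hpyth := norm_add_sq_eq_norm_sq_add_norm_sq_of_inner_eq_zero (𝕜 := 𝕜) (⟪u, w⟫_𝕜 • u)
    (w - ⟪u, w⟫_𝕜 • u) (by rw [inner_smul_left, inner_sub_inner_smul_self_eq_zero hu, mul_zero])
  rw [add_sub_cancel, norm_smul, hu, mul_one] at hpyth
  linarith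

theorem one_sub_sq_div_sq_le_norm_inner (T : E →ₗ[𝕜] F) {u w : E} (hu : ‖u‖ = 1)
    (hw : ‖w‖ = 1) (hTu : T u = 0) {Δ ε : ℝ} (hΔ : 0 < Δ)
    (hgap : ∀ v, ⟪u, v⟫_𝕜 = 0 → Δ ^ 2 * ‖v‖ ^ 2 ≤ ‖T v‖ ^ 2) (hTw : ‖T w‖ ^ 2 ≤ ε ^ 2) :
    1 - ε ^ 2 / Δ ^ 2 ≤ ‖⟪u, w⟫_𝕜‖ := by
  set c := ⟪u, w⟫_𝕜
  have hTv : T (w - c • u) = T w := by rw [map_sub, map_smul, hTu, smul_zero, sub_zero]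
  have hgap_w : Δ ^ 2 * (1 - ‖c‖ ^ 2) ≤ ε ^ 2 := by
    have := hgap _ (inner_sub_inner_smul_self_eq_zero hu w)
    rw [norm_sub_inner_smul_sq hu, hw, one_pow, hTv] at this
    linarith
  have hc_le : ‖c‖ ≤ 1 := by simpa [hu, hw] using norm_inner_le_norm (𝕜 := 𝕜) u w
  have hΔsq : 0 < Δ ^ 2 := by positivity
  calc 1 - ε ^ 2 / Δ ^ 2 ≤ ‖c‖ ^ 2 := by
        rw [sub_le_comm, le_div_iff₀ hΔsq]; linarith
    _ ≤ ‖c‖ := by nlinarith [norm_nonneg c]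

end Overlap

theorem sum_normSq_eq_norm_toLp_sq {ι : Type*} [Fintype ι] (v : ι → ℂ) :
    ∑ x, Complex.normSq (v x) = ‖WithLp.toLp 2 v‖ ^ 2 := by
  simp [EuclideanSpace.norm_sq_eq, Complex.normSq_eq_norm_sq]

theorem sum_conj_mul_eq_inner_toLp {ι : Type*} [Fintype ι] (u v : ι → ℂ) :
    ∑ x, (starRingEnd ℂ) (u x) * v x = ⟪WithLp.toLp 2 u, WithLp.toLp 2 v⟫_ℂ := by
  simp [EuclideanSpace.inner_toLp_toLp, dotProduct, mul_comm]

theorem stmt_10_general {N : ℕ} (H₁ H₂ : Matrix (Fin N) (Fin N) ℂ)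
    (ψ₁ ψ₂ : Fin N → ℂ)
    (hψ₁unit : ∑ x, Complex.normSq (ψ₁ x) = 1)
    (hψ₂unit : ∑ x, Complex.normSq (ψ₂ x) = 1)
    (hg₁ : H₁.mulVec ψ₁ = 0) (hg₂ : H₂.mulVec ψ₂ = 0)
    (Δ ε : ℝ) (hΔ : 0 < Δ)
    (hgap : ∀ v : Fin N → ℂ, (∑ x, (starRingEnd ℂ) (ψ₁ x) * v x = 0) →
      Δ ^ 2 * ∑ x, Complex.normSq (v x) ≤ ∑ x, Complex.normSq ((H₁.mulVec v) x))
    (hclose : ∀ v : Fin N → ℂ,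
      ∑ x, Complex.normSq (((H₁ - H₂).mulVec v) x) ≤ ε ^ 2 * ∑ x, Complex.normSq (v x)) :
    1 - ε ^ 2 / Δ ^ 2 ≤ ‖∑ x, (starRingEnd ℂ) (ψ₂ x) * ψ₁ x‖ := by
  have hunit (ψ : Fin N → ℂ) (h : ∑ x, Complex.normSq (ψ x) = 1) : ‖WithLp.toLp 2 ψ‖ = 1 := by
    rwa [sum_normSq_eq_norm_toLp_sq, pow_eq_one_iff_of_nonneg (norm_nonneg _) two_ne_zero] at h
  have hH₁ψ₂ : H₁.mulVec ψ₂ = (H₁ - H₂).mulVec ψ₂ := by rw [Matrix.sub_mulVec, hg₂, sub_zero]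
  rw [sum_conj_mul_eq_inner_toLp, norm_inner_symm]
  refine one_sub_sq_div_sq_le_norm_inner (Matrix.toLpLin 2 2 H₁) (hunit ψ₁ hψ₁unit)
    (hunit ψ₂ hψ₂unit) (by simp [Matrix.toLpLin_apply, hg₁]) hΔ ?_ ?_
  · intro v hv
    obtain ⟨v, rfl⟩ := WithLp.toLp_surjective 2 v
    rw [← sum_conj_mul_eq_inner_toLp] at hv
    simpa only [Matrix.toLpLin_apply, ← sum_normSq_eq_norm_toLp_sq] using hgap v hv
  · simpa only [Matrix.toLpLin_apply, ← sum_normSq_eq_norm_toLp_sq, hH₁ψ₂, hψ₂unit, mul_one]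
      using hclose ψ₂

/-- Let `H₁, H₂` be Hermitian with `H₁ψ₁ = 0`, `H₂ψ₂ = 0` for unit vectors
`ψ₁, ψ₂`, spectral gap `Δ > 0` of `H₁` (i.e. `‖H₁ v‖ ≥ Δ‖v‖` on the orthogonal
complement of `ψ₁`), and `‖H₁ − H₂‖ ≤ ε` in operator norm. Then
`|⟨ψ₂|ψ₁⟩| ≥ 1 − ε²/Δ²`. -/
theorem stmt_10 {N : ℕ} (H₁ H₂ : Matrix (Fin N) (Fin N) ℂ)
    (hH₁ : H₁.IsHermitian) (hH₂ : H₂.IsHermitian)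
    (ψ₁ ψ₂ : Fin N → ℂ)
    (hψ₁unit : ∑ x, Complex.normSq (ψ₁ x) = 1)
    (hψ₂unit : ∑ x, Complex.normSq (ψ₂ x) = 1)
    (hg₁ : H₁.mulVec ψ₁ = 0) (hg₂ : H₂.mulVec ψ₂ = 0)
    (Δ ε : ℝ) (hΔ : 0 < Δ) (hε : 0 ≤ ε)
    (hgap : ∀ v : Fin N → ℂ, (∑ x, (starRingEnd ℂ) (ψ₁ x) * v x = 0) →
      Δ ^ 2 * ∑ x, Complex.normSq (v x) ≤ ∑ x, Complex.normSq ((H₁.mulVec v) x))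
    (hclose : ∀ v : Fin N → ℂ,
      ∑ x, Complex.normSq (((H₁ - H₂).mulVec v) x) ≤ ε ^ 2 * ∑ x, Complex.normSq (v x)) :
    1 - ε ^ 2 / Δ ^ 2 ≤ ‖∑ x, (starRingEnd ℂ) (ψ₂ x) * ψ₁ x‖ :=
  stmt_10_general H₁ H₂ ψ₁ ψ₂ hψ₁unit hψ₂unit hg₁ hg₂ Δ ε hΔ hgap hclose
end

section
/- Let Π be a Hermitian projector with entries in {0, 1/2, 1}. Then Π decomposes, up to permutation of basis vectors, into diagonal blocks each of which is either the 1×1 matrix (1) or the 2×2 matrix with all entries 1/2; equivalently, every nonzero off-diagonal entry is 1/2, and each basis index x with Π(x,x) = 1/2 has exactly one partner y ≠ x with Π(x,y) = 1/2, while indices with Π(x,x) = 1 have no off-diagonal nonzero entries in their row. -/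
/-- A symmetric projector `P` with entries in `{0, 1/2, 1}` decomposes into
blocks: every off-diagonal entry is `0` or `1/2`; every `x` with `P x x = 1/2` has a
unique partner `y ≠ x` with `P x y = 1/2`; and every `x` with `P x x = 1` has no nonzero
off-diagonal entry in its row. -/
theorem stmt_15 {N : ℕ} (P : Matrix (Fin N) (Fin N) ℝ)
    (hsymm : P.IsSymm) (hproj : P * P = P)
    (hentries : ∀ x y, P x y = 0 ∨ P x y = 1/2 ∨ P x y = 1) :
    (∀ x y, x ≠ y → P x y = 0 ∨ P x y = 1/2) ∧
    (∀ x, P x x = 1/2 → ∃! y, y ≠ x ∧ P x y = 1/2) ∧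
    (∀ x, P x x = 1 → ∀ y, y ≠ x → P x y = 0) := by
  have hsym : ∀ x y, P y x = P x y := fun x y => by
    have := congrFun (congrFun hsymm x) y
    simpa [Matrix.transpose_apply] using this
  have key : ∀ x, ∑ y, (P x y)^2 = P x x := by
    intro x
    have h := congrFun (congrFun hproj x) x
    simp only [Matrix.mul_apply] at h
    rw [← h]
    apply Finset.sum_congr rfl
    intro y _
    rw [hsym x y]; ring
  have key' : ∀ x, ∑ y ∈ Finset.univ.erase x, (P x y)^2 = P x x - (P x x)^2 := by
    intro x
    have := key x
    rw [← Finset.add_sum_erase _ _ (Finset.mem_univ x)] at this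
    linarith
  have hnn : ∀ x y, (0:ℝ) ≤ (P x y)^2 := fun x y => sq_nonneg _
  have hdiagle : ∀ x, P x x - (P x x)^2 ≤ 1/4 := by
    intro x
    rcases hentries x x with h | h | h <;> rw [h] <;> norm_num
  have hsingle : ∀ x y, y ≠ x → (P x y)^2 ≤ P x x - (P x x)^2 := by
    intro x y hy
    rw [← key' x]
    exact Finset.single_le_sum (fun i _ => hnn x i) (Finset.mem_erase.mpr ⟨hy, Finset.mem_univ y⟩)
  have hno1 : ∀ x y, y ≠ x → P x y ≠ 1 := by
    intro x y hy h1
    have := hsingle x y hy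
    rw [h1] at this
    have := hdiagle x
    linarith
  refine ⟨?_, ?_, ?_⟩
  · intro x y hxy
    rcases hentries x y with h | h | h
    · exact Or.inl h
    · exact Or.inr h
    · exact absurd h (hno1 x y (Ne.symm hxy))
  · intro x hx
    have hsum : ∑ y ∈ Finset.univ.erase x, (P x y)^2 = 1/4 := by
      rw [key' x, hx]; norm_num
    have hex : ∃ y, y ≠ x ∧ P x y = 1/2 := by
      by_contra hne
      push_neg at hne
      have : ∑ y ∈ Finset.univ.erase x, (P x y)^2 = 0 := by
        apply Finset.sum_eq_zero
        intro y hy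
        have hyx := (Finset.mem_erase.mp hy).1
        rcases hentries x y with h | h | h
        · rw [h]; ring
        · exact absurd h (hne y hyx)
        · exact absurd h (hno1 x y hyx)
      rw [this] at hsum; norm_num at hsum
    obtain ⟨y, hyx, hy⟩ := hex
    refine ⟨y, ⟨hyx, hy⟩, ?_⟩
    intro z ⟨hzx, hz⟩
    by_contra hzy
    have hpair : ∑ w ∈ ({z, y} : Finset (Fin N)), (P x w)^2 = 1/2 := by
      rw [Finset.sum_pair hzy, hz, hy]; norm_num
    have hsub : ({z, y} : Finset (Fin N)) ⊆ Finset.univ.erase x := by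
      intro w hw
      rcases Finset.mem_insert.mp hw with h | h
      · subst h; exact Finset.mem_erase.mpr ⟨hzx, Finset.mem_univ _⟩
      · rw [Finset.mem_singleton] at h; subst h
        exact Finset.mem_erase.mpr ⟨hyx, Finset.mem_univ _⟩
    have := Finset.sum_le_sum_of_subset_of_nonneg hsub (fun i _ _ => hnn x i)
    rw [hpair, hsum] at this
    linarith
  · intro x hx y hy
    have hzero : ∑ w ∈ Finset.univ.erase x, (P x w)^2 = 0 := by
      rw [key' x, hx]; norm_num
    have := (Finset.sum_eq_zero_iff_of_nonneg (fun i _ => hnn x i)).mp hzero y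
      (Finset.mem_erase.mpr ⟨hy, Finset.mem_univ y⟩)
    exact pow_eq_zero_iff (by norm_num) |>.mp this
end

section
/- Let H be a classical (diagonal) Hamiltonian on n qubits with H(x) = ⟨x|H|x⟩, β > 0, and let |π⟩ = Z^{-1/2} Σ_x e^{-βH(x)/2}|x⟩ be the coherent Gibbs state with Z = Σ_x e^{-βH(x)}. For each qubit j, define Γ_j = X_j e^{-βH/2} X_j e^{βH/2}, where X_j is the Pauli X on qubit j. Then Γ_j is diagonal in the standard basis with positive diagonal entries, and X_j|π⟩ = Γ_j|π⟩ for all j; moreover each operator Γ_j − X_j is positive semidefinite with (Γ_j − X_j)|π⟩ = 0. -/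
open scoped Classical

/-- Bit-flip of coordinate `j`. -/
noncomputable def flipBit {n : ℕ} (j : Fin n) (x : Fin n → Bool) : Fin n → Bool :=
  Function.update x j (!x j)

/-- The Pauli `X` on qubit `j` as a matrix in the standard basis of `{0,1}^n`. -/
noncomputable def pauliX {n : ℕ} (j : Fin n) :
    Matrix (Fin n → Bool) (Fin n → Bool) ℝ :=
  fun x y => if y = flipBit j x then 1 else 0

/-!
Conjugating a diagonal matrix by the permutation matrix `X_j` permutes its diagonal, so
`Γ_j = diag g` with `g x = e^{-β (H (x ⊕ e_j) - H x) / 2} > 0`, and `g x * π x = π (x ⊕ e_j)` is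
exactly `Γ_j π = X_j π`. Since `g x * g (x ⊕ e_j) = 1`, twice the quadratic form of `Γ_j - X_j`
at `v` equals `∑ x, g (x ⊕ e_j) * (g x * v x - v (x ⊕ e_j)) ^ 2 ≥ 0`.
-/

open Matrix

lemma Function.Involutive.inv_eq_self {α : Type*} {σ : Equiv.Perm α} (hσ : Function.Involutive σ) :
    σ⁻¹ = σ :=
  Function.Involutive.symm_eq_self_of_involutive σ hσ

namespace Matrix

variable {ι : Type*} [DecidableEq ι]

lemma isHermitian_permMatrix_of_involutive {R : Type*} [NonAssocSemiring R] [StarRing R]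
    {σ : Equiv.Perm ι} (hσ : Function.Involutive σ) : (σ.permMatrix R).IsHermitian := by
  rw [IsHermitian, conjTranspose_permMatrix, hσ.inv_eq_self]

variable [Fintype ι]

lemma permMatrix_mul_diagonal_mul_permMatrix_inv {R : Type*} [NonAssocSemiring R]
    (σ : Equiv.Perm ι) (d : ι → R) :
    σ.permMatrix R * diagonal d * σ⁻¹.permMatrix R = diagonal (d ∘ σ) := by
  rw [PEquiv.toMatrix_toPEquiv_mul, PEquiv.mul_toMatrix_toPEquiv, submatrix_submatrix]
  exact submatrix_diagonal_equiv d σ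

lemma diagonal_mulVec_eq_permMatrix_mulVec {R : Type*} [CommRing R] {σ : Equiv.Perm ι}
    {g v : ι → R} (hgv : ∀ x, g x * v x = v (σ x)) :
    diagonal g *ᵥ v = σ.permMatrix R *ᵥ v := by
  ext x
  rw [mulVec_diagonal, permMatrix_mulVec, Function.comp_apply, hgv]

lemma posSemidef_diagonal_sub_permMatrix {σ : Equiv.Perm ι} (hσ : Function.Involutive σ)
    {g : ι → ℝ} (hg : ∀ x, 0 ≤ g x) (hgσ : ∀ x, g x * g (σ x) = 1) :
    (diagonal g - σ.permMatrix ℝ).PosSemidef := by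
  refine posSemidef_iff_dotProduct_mulVec.mpr
    ⟨(isHermitian_diagonal g).sub (isHermitian_permMatrix_of_involutive hσ), fun v => ?_⟩
  have hform : star v ⬝ᵥ (diagonal g - σ.permMatrix ℝ) *ᵥ v
      = ∑ x, (g x * v x ^ 2 - v x * v (σ x)) := by
    simp only [star_trivial, dotProduct, sub_mulVec, mulVec_diagonal, permMatrix_mulVec,
      Pi.sub_apply, Function.comp_apply]
    exact Finset.sum_congr rfl fun x _ => by ring
  have hsq : 2 * ∑ x, (g x * v x ^ 2 - v x * v (σ x))
      = ∑ x, g (σ x) * (g x * v x - v (σ x)) ^ 2 := by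
    have hreindex : ∑ x, g (σ x) * v (σ x) ^ 2 = ∑ x, g x * v x ^ 2 :=
      Equiv.sum_comp σ fun x => g x * v x ^ 2
    have hterm : ∀ x, g (σ x) * (g x * v x - v (σ x)) ^ 2
        = g x * v x ^ 2 + g (σ x) * v (σ x) ^ 2 - 2 * (v x * v (σ x)) := fun x => by
      linear_combination (g x * v x ^ 2 - 2 * v x * v (σ x)) * hgσ x
    rw [Finset.sum_congr rfl fun x _ => hterm x]
    simp only [Finset.sum_sub_distrib, Finset.sum_add_distrib, ← Finset.mul_sum, hreindex]
    ring
  have hnonneg : 0 ≤ ∑ x, g (σ x) * (g x * v x - v (σ x)) ^ 2 :=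
    Finset.sum_nonneg fun x _ => mul_nonneg (hg (σ x)) (sq_nonneg _)
  linarith

end Matrix

lemma flipBit_involutive {n : ℕ} (j : Fin n) : Function.Involutive (flipBit j) := by
  intro x
  funext i
  by_cases h : i = j <;> simp [flipBit, Function.update, h]

noncomputable def flipBitPerm {n : ℕ} (j : Fin n) : Equiv.Perm (Fin n → Bool) :=
  (flipBit_involutive j).toPerm

lemma pauliX_eq_permMatrix {n : ℕ} (j : Fin n) : pauliX j = (flipBitPerm j).permMatrix ℝ := by
  ext x y
  simp [pauliX, flipBitPerm, eq_comm]

theorem stmt_17_general {n : ℕ} (β : ℝ) (H : (Fin n → Bool) → ℝ) (j : Fin n) :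
    let Z : ℝ := ∑ x, Real.exp (-β * H x)
    let π : (Fin n → Bool) → ℝ := fun x => Real.exp (-β * H x / 2) / Real.sqrt Z
    let Γ : Matrix (Fin n → Bool) (Fin n → Bool) ℝ :=
      pauliX j * Matrix.diagonal (fun x => Real.exp (-β * H x / 2)) * pauliX j *
        Matrix.diagonal (fun x => Real.exp (β * H x / 2))
    (∀ x y, x ≠ y → Γ x y = 0) ∧ (∀ x, 0 < Γ x x) ∧
      (pauliX j).mulVec π = Γ.mulVec π ∧
      (Γ - pauliX j).PosSemidef ∧ (Γ - pauliX j).mulVec π = 0 := by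
  intro Z π Γ
  set σ := flipBitPerm j
  have hσ : Function.Involutive σ := flipBit_involutive j
  set g : (Fin n → Bool) → ℝ := fun x => Real.exp (-β * H (σ x) / 2) * Real.exp (β * H x / 2)
  have hΓ : Γ = diagonal g := by
    have hconj := permMatrix_mul_diagonal_mul_permMatrix_inv σ fun x => Real.exp (-β * H x / 2)
    rw [hσ.inv_eq_self, ← pauliX_eq_permMatrix] at hconj
    change pauliX j * _ * pauliX j * _ = _
    rw [hconj, diagonal_mul_diagonal]
    rfl
  have hgπ : ∀ x, g x * π x = π (σ x) := by
    intro x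
    simp only [g, π, mul_div_assoc', ← Real.exp_add]
    ring_nf
  have hgσ : ∀ x, g x * g (σ x) = 1 := by
    intro x
    simp only [g, hσ x, ← Real.exp_add, Real.exp_eq_one_iff]
    ring
  have hXπ : pauliX j *ᵥ π = Γ *ᵥ π := by
    rw [hΓ, pauliX_eq_permMatrix, diagonal_mulVec_eq_permMatrix_mulVec hgπ]
  refine ⟨fun x y hxy => by rw [hΓ, diagonal_apply_ne _ hxy],
    fun x => by rw [hΓ, diagonal_apply_eq]; positivity, hXπ, ?_, ?_⟩
  · rw [hΓ, pauliX_eq_permMatrix]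
    exact posSemidef_diagonal_sub_permMatrix hσ (fun x => by positivity) hgσ
  · rw [sub_mulVec, hXπ, sub_self]

/-- For a classical (diagonal) Hamiltonian `H` on `n` qubits, `β > 0`, the
coherent Gibbs state `π(x) = e^{-βH(x)/2}/√Z`, and
`Γ_j = X_j e^{-βH/2} X_j e^{βH/2}`: `Γ_j` is diagonal with positive diagonal entries,
`X_j π = Γ_j π`, and `Γ_j − X_j` is positive semidefinite with `(Γ_j − X_j) π = 0`. -/
theorem stmt_17 {n : ℕ} (β : ℝ) (hβ : 0 < β) (H : (Fin n → Bool) → ℝ) (j : Fin n) :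
    let Z : ℝ := ∑ x, Real.exp (-β * H x)
    let π : (Fin n → Bool) → ℝ := fun x => Real.exp (-β * H x / 2) / Real.sqrt Z
    let Γ : Matrix (Fin n → Bool) (Fin n → Bool) ℝ :=
      pauliX j * Matrix.diagonal (fun x => Real.exp (-β * H x / 2)) * pauliX j *
        Matrix.diagonal (fun x => Real.exp (β * H x / 2))
    (∀ x y, x ≠ y → Γ x y = 0) ∧ (∀ x, 0 < Γ x x) ∧
      (pauliX j).mulVec π = Γ.mulVec π ∧
      (Γ - pauliX j).PosSemidef ∧ (Γ - pauliX j).mulVec π = 0 :=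
  stmt_17_general β H j
end
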